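/- Let α ∈ (0, 1) and A > 0, and let f : (0, π] → ℝ be twice continuously differentiable with f(x) = 0 for all x ∈ [π/4, π], and |f(x)| ≤ A x^α, |f'(x)| ≤ A x^{α−1}, |f''(x)| ≤ A x^{α−2} for all x ∈ (0, π/4]. Then there exists a constant C depending only on α such that for every integer k ≥ 1: | ∫_0^π f(x) sin(kx) dx | ≤ C · A · k^{−1−α}. -/

import Mathlib

open MeasureTheory Real Set

/-!
Split the integral at `δ = 1/(2k)`. On `(0, δ)` the bound `|sin kx| ≤ kx` gives
`A k δ^(α+2)`. On `(δ, π/2)` integrate by parts twice: the boundary terms at `π/2` vanish because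
`f` vanishes near it, those at `δ` are at most `A δ^α / k` and `A δ^(α-1) / k²`, and the remaining
integral is at most `k⁻² ∫_δ^∞ A x^(α-2) dx = A δ^(α-1) / ((1-α) k²)`. Since `δ ≍ 1/k`, every
term is `O(A k^(-1-α))`.
-/

theorem eqOn_zero_of_hasDerivAt {𝕜 E : Type*} [NontriviallyNormedField 𝕜] [NormedAddCommGroup E]
    [NormedSpace 𝕜 E] {f f' : 𝕜 → E} {s : Set 𝕜} (hs : IsOpen s)
    (hf : ∀ x ∈ s, HasDerivAt f (f' x) x) (h0 : EqOn f 0 s) : EqOn f' 0 s := fun x hx => by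
  rw [← (hf x hx).deriv, h0.deriv hs hx]
  simp

theorem intervalIntegral.integral_eq_of_eqOn_zero {E : Type*} [NormedAddCommGroup E]
    [NormedSpace ℝ E] {F : ℝ → E} {a b c : ℝ} (hab : a ≤ b) (hbc : b ≤ c)
    (hF : EqOn F 0 (Icc b c)) : ∫ x in a..c, F x = ∫ x in a..b, F x := by
  rw [← uIcc_of_le hbc] at hF
  have hbc' : IntervalIntegrable F volume b c := (continuousOn_const.congr hF).intervalIntegrable
  by_cases hab' : IntervalIntegrable F volume a b
  · rw [← integral_add_adjacent_intervals hab' hbc', integral_congr hF]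
    simp
  · have hac : ¬IntervalIntegrable F volume a c := fun h =>
      hab' (h.mono_set (uIcc_subset_uIcc_left (by simp [uIcc_of_le (hab.trans hbc), hab, hbc])))
    rw [integral_undef hac, integral_undef hab']

theorem integral_mul_sin_eq_of_hasDerivAt {f f' : ℝ → ℝ} {a b K : ℝ} (hK : K ≠ 0)
    (hf : ∀ x ∈ uIcc a b, HasDerivAt f (f' x) x) (hf' : IntervalIntegrable f' volume a b) :
    ∫ x in a..b, f x * sin (K * x) =
      (f a * cos (K * a) - f b * cos (K * b)) / K + (∫ x in a..b, f' x * cos (K * x)) / K := by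
  have hv (x : ℝ) : HasDerivAt (fun y => -cos (K * y) / K) (sin (K * x)) x :=
    (((hasDerivAt_id' x).const_mul K).cos.neg.div_const K).congr_deriv (by field_simp)
  rw [intervalIntegral.integral_mul_deriv_eq_deriv_mul hf (fun x _ => hv x) hf'
    ((by fun_prop : Continuous fun x => sin (K * x)).intervalIntegrable _ _),
    ← intervalIntegral.integral_div]
  simp only [mul_neg, neg_div, intervalIntegral.integral_neg, mul_div_assoc]
  ring

theorem integral_mul_cos_eq_of_hasDerivAt {f f' : ℝ → ℝ} {a b K : ℝ} (hK : K ≠ 0)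
    (hf : ∀ x ∈ uIcc a b, HasDerivAt f (f' x) x) (hf' : IntervalIntegrable f' volume a b) :
    ∫ x in a..b, f x * cos (K * x) =
      (f b * sin (K * b) - f a * sin (K * a)) / K - (∫ x in a..b, f' x * sin (K * x)) / K := by
  have hv (x : ℝ) : HasDerivAt (fun y => sin (K * y) / K) (cos (K * x)) x :=
    (((hasDerivAt_id' x).const_mul K).sin.div_const K).congr_deriv (by field_simp)
  rw [intervalIntegral.integral_mul_deriv_eq_deriv_mul hf (fun x _ => hv x) hf'
    ((by fun_prop : Continuous fun x => cos (K * x)).intervalIntegrable _ _),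
    ← intervalIntegral.integral_div]
  simp only [mul_div_assoc]
  ring

theorem integral_mul_sin_eq_of_hasDerivAt_two {f f' f'' : ℝ → ℝ} {a b K : ℝ} (hK : K ≠ 0)
    (hf : ∀ x ∈ uIcc a b, HasDerivAt f (f' x) x) (hf' : ∀ x ∈ uIcc a b, HasDerivAt f' (f'' x) x)
    (hf'' : IntervalIntegrable f'' volume a b) :
    ∫ x in a..b, f x * sin (K * x) =
      (f a * cos (K * a) - f b * cos (K * b)) / K +
        (f' b * sin (K * b) - f' a * sin (K * a)) / K ^ 2 - (∫ x in a..b, f'' x * sin (K * x)) / K ^ 2 := by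
  have hf'i : IntervalIntegrable f' volume a b :=
    ContinuousOn.intervalIntegrable fun x hx => (hf' x hx).continuousAt.continuousWithinAt
  rw [integral_mul_sin_eq_of_hasDerivAt hK hf hf'i, integral_mul_cos_eq_of_hasDerivAt hK hf' hf'']
  ring

theorem integral_rpow_sub_two_le {α a b : ℝ} (hα : α < 1) (ha : 0 < a) (hab : a ≤ b) :
    ∫ x in a..b, x ^ (α - 2) ≤ a ^ (α - 1) / (1 - α) := by
  have h0 : (0 : ℝ) ∉ uIcc a b := by
    rw [uIcc_of_le hab]; exact fun h => ha.not_ge h.1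
  rw [integral_rpow (Or.inr ⟨by linarith, h0⟩), show α - 2 + 1 = α - 1 by ring,
    show α - 1 = -(1 - α) by ring, div_neg, ← neg_div, div_le_div_iff_of_pos_right (by linarith)]
  have := rpow_pos_of_pos (ha.trans_le hab) (-(1 - α))
  linarith

theorem abs_mul_sin_le_of_abs_le_rpow {y x A K α : ℝ} (hx : 0 < x) (hK : 0 ≤ K)
    (hy : |y| ≤ A * x ^ α) : |y * sin (K * x)| ≤ A * K * x ^ (α + 1) :=
  calc |y * sin (K * x)| ≤ A * x ^ α * (K * x) := by
        rw [abs_mul]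
        refine mul_le_mul hy ?_ (abs_nonneg _) ((abs_nonneg y).trans hy)
        exact abs_sin_le_abs.trans (abs_of_nonneg (by positivity)).le
    _ = A * K * x ^ (α + 1) := by rw [rpow_add_one hx.ne']; ring

theorem intervalIntegrable_mul_sin_of_abs_le_rpow {f : ℝ → ℝ} {α A K δ : ℝ} (hα : -2 < α)
    (hK : 0 ≤ K) (hδ : 0 ≤ δ) (hfc : ContinuousOn f (Ioc 0 δ))
    (hf : ∀ x ∈ Ioc 0 δ, |f x| ≤ A * x ^ α) :
    IntervalIntegrable (fun x => f x * sin (K * x)) volume 0 δ := by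
  refine ((intervalIntegral.intervalIntegrable_rpow' (r := α + 1) (by linarith)).const_mul
    (A * K)).mono_fun' ?_ ?_
  · rw [uIoc_of_le hδ]
    exact (hfc.mul (by fun_prop)).aestronglyMeasurable measurableSet_Ioc
  · rw [uIoc_of_le hδ]
    filter_upwards [ae_restrict_mem measurableSet_Ioc] with x hx
    exact abs_mul_sin_le_of_abs_le_rpow hx.1 hK (hf x hx)

theorem abs_integral_mul_sin_le_of_abs_le_rpow {f : ℝ → ℝ} {α A K δ : ℝ} (hα : -2 < α)
    (hK : 0 ≤ K) (hδ : 0 ≤ δ) (hf : ∀ x ∈ Ioc 0 δ, |f x| ≤ A * x ^ α) :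
    |∫ x in 0..δ, f x * sin (K * x)| ≤ A * K * δ ^ (α + 2) / (α + 2) := by
  have hbound := intervalIntegral.norm_integral_le_of_norm_le (f := fun x => f x * sin (K * x)) hδ
    (Filter.Eventually.of_forall fun x hx => abs_mul_sin_le_of_abs_le_rpow hx.1 hK (hf x hx))
    ((intervalIntegral.intervalIntegrable_rpow' (r := α + 1) (by linarith)).const_mul (A * K))
  rwa [intervalIntegral.integral_const_mul, integral_rpow (Or.inl (by linarith)),
    zero_rpow (by linarith), show α + 1 + 1 = α + 2 by ring, sub_zero, ← mul_div_assoc,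
    Real.norm_eq_abs] at hbound

theorem abs_integral_mul_sin_le_of_hasDerivAt_two {f f' f'' : ℝ → ℝ} {α A K a b : ℝ}
    (hα : α < 1) (ha : 0 < a) (hab : a ≤ b) (hK : 0 < K)
    (hf : ∀ x ∈ Icc a b, HasDerivAt f (f' x) x) (hf' : ∀ x ∈ Icc a b, HasDerivAt f' (f'' x) x)
    (hf''i : IntervalIntegrable f'' volume a b) (hfb : f b = 0) (hf'b : f' b = 0)
    (hf'' : ∀ x ∈ Icc a b, |f'' x| ≤ A * x ^ (α - 2)) :
    |∫ x in a..b, f x * sin (K * x)| ≤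
      |f a| / K + (|f' a| + A * a ^ (α - 1) / (1 - α)) / K ^ 2 := by
  rw [← uIcc_of_le hab] at hf hf'
  have hA : 0 ≤ A := nonneg_of_mul_nonneg_left ((abs_nonneg _).trans (hf'' a ⟨le_rfl, hab⟩))
    (rpow_pos_of_pos ha _)
  have hJ : |∫ x in a..b, f'' x * sin (K * x)| ≤ A * a ^ (α - 1) / (1 - α) := by
    calc |∫ x in a..b, f'' x * sin (K * x)| ≤ ∫ x in a..b, A * x ^ (α - 2) := by
          refine intervalIntegral.norm_integral_le_of_norm_le
            (f := fun x => f'' x * sin (K * x)) hab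
            (Filter.Eventually.of_forall fun x hx => ?_) ?_
          · rw [norm_mul]
            exact (mul_le_of_le_one_right (norm_nonneg _) (abs_sin_le_one _)).trans
              (hf'' x (Ioc_subset_Icc_self hx))
          · refine (intervalIntegral.intervalIntegrable_rpow (Or.inr ?_)).const_mul A
            rw [uIcc_of_le hab]; exact fun h => ha.not_ge h.1
      _ ≤ A * a ^ (α - 1) / (1 - α) := by
          rw [intervalIntegral.integral_const_mul, mul_div_assoc]
          exact mul_le_mul_of_nonneg_left (integral_rpow_sub_two_le hα ha hab) hA
  rw [integral_mul_sin_eq_of_hasDerivAt_two hK.ne' hf hf' hf''i, hfb, hf'b]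
  set J := ∫ x in a..b, f'' x * sin (K * x)
  calc _ = |f a * cos (K * a) / K - (f' a * sin (K * a) + J) / K ^ 2| := by ring_nf
    _ ≤ |f a * cos (K * a)| / K + (|f' a * sin (K * a)| + |J|) / K ^ 2 := by
        refine (abs_sub _ _).trans (add_le_add ?_ ?_)
        · rw [abs_div, abs_of_pos hK]
        · rw [abs_div, abs_of_pos (by positivity : (0 : ℝ) < K ^ 2)]
          exact div_le_div_of_nonneg_right (abs_add_le _ _) (by positivity)
    _ ≤ |f a| / K + (|f' a| + A * a ^ (α - 1) / (1 - α)) / K ^ 2 := by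
        rw [abs_mul, abs_mul]
        gcongr
        · exact mul_le_of_le_one_right (abs_nonneg _) (abs_cos_le_one _)
        · exact mul_le_of_le_one_right (abs_nonneg _) (abs_sin_le_one _)

theorem abs_integral_mul_sin_le_of_rpow_bounds {f f' f'' : ℝ → ℝ} {α A K δ b : ℝ}
    (hα₀ : -2 < α) (hα₁ : α < 1) (hK : 0 < K) (hδ : 0 < δ) (hδb : δ ≤ b)
    (hf : ∀ x ∈ Ioc 0 b, HasDerivAt f (f' x) x) (hf' : ∀ x ∈ Icc δ b, HasDerivAt f' (f'' x) x)
    (hf''i : IntervalIntegrable f'' volume δ b) (hfb : f b = 0) (hf'b : f' b = 0)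
    (hf₀ : ∀ x ∈ Ioc 0 δ, |f x| ≤ A * x ^ α) (hf'δ : |f' δ| ≤ A * δ ^ (α - 1))
    (hf''₀ : ∀ x ∈ Icc δ b, |f'' x| ≤ A * x ^ (α - 2)) :
    |∫ x in 0..b, f x * sin (K * x)| ≤ A * K * δ ^ (α + 2) / (α + 2) +
      (A * δ ^ α / K + (A * δ ^ (α - 1) + A * δ ^ (α - 1) / (1 - α)) / K ^ 2) := by
  have hfc : ContinuousOn f (Ioc 0 b) := fun x hx => (hf x hx).continuousAt.continuousWithinAt
  have hsub : Icc δ b ⊆ Ioc 0 b := fun x hx => ⟨hδ.trans_le hx.1, hx.2⟩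
  have hI₁ := intervalIntegrable_mul_sin_of_abs_le_rpow hα₀ hK.le hδ.le
    (hfc.mono (Ioc_subset_Ioc_right hδb)) hf₀
  have hI₂ : IntervalIntegrable (fun x => f x * sin (K * x)) volume δ b :=
    ContinuousOn.intervalIntegrable (uIcc_of_le hδb ▸ (hfc.mono hsub).mul (by fun_prop))
  rw [← intervalIntegral.integral_add_adjacent_intervals hI₁ hI₂]
  refine (abs_add_le _ _).trans (add_le_add
    (abs_integral_mul_sin_le_of_abs_le_rpow hα₀ hK.le hδ.le hf₀)
    ((abs_integral_mul_sin_le_of_hasDerivAt_two hα₁ hδ hδb hK (fun x hx => hf x (hsub hx)) hf'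
      hf''i hfb hf'b hf''₀).trans ?_))
  gcongr
  exact hf₀ δ ⟨hδ, le_rfl⟩

theorem split_bound_at_inv_two_mul_le {α A K δ : ℝ} (hα0 : 0 < α) (hα1 : α < 1) (hA : 0 ≤ A)
    (hK : 0 < K) (hδ : δ = (2 * K)⁻¹) :
    A * K * δ ^ (α + 2) / (α + 2) +
        (A * δ ^ α / K + (A * δ ^ (α - 1) + A * δ ^ (α - 1) / (1 - α)) / K ^ 2) ≤
      (7 + 4 / (1 - α)) * A * K ^ (-1 - α) := by
  have hδ0 : 0 < δ := hδ ▸ by positivity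
  have hK' : K = (2 * δ)⁻¹ := by rw [hδ, mul_inv, inv_inv]; field_simp
  have hu : δ ^ (α + 1) ≤ K ^ (-1 - α) := by
    rw [hδ, inv_rpow (by positivity), ← rpow_neg (by positivity), show -(α + 1) = -1 - α by ring]
    exact rpow_le_rpow_of_nonpos hK (by linarith) (by linarith)
  have e1 : δ ^ (α + 2) = δ ^ (α + 1) * δ := by rw [← rpow_add_one hδ0.ne']; ring_nf
  have e2 : δ ^ α = δ ^ (α + 1) / δ := by rw [rpow_add_one hδ0.ne']; field_simp
  have e3 : δ ^ (α - 1) = δ ^ (α + 1) / δ ^ 2 := by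
    rw [eq_div_iff (by positivity), ← rpow_two, ← rpow_add hδ0]; ring_nf
  have h1α : 0 < 1 - α := by linarith
  calc _ = A * δ ^ (α + 1) * (1 / (2 * (α + 2)) + 6 + 4 / (1 - α)) := by
        rw [e1, e2, e3, hK']; field_simp; ring
    _ ≤ A * δ ^ (α + 1) * (7 + 4 / (1 - α)) := by
        gcongr A * δ ^ (α + 1) * ?_
        have : 1 / (2 * (α + 2)) ≤ 1 := by rw [div_le_one (by positivity)]; linarith
        linarith
    _ = (7 + 4 / (1 - α)) * A * δ ^ (α + 1) := by ring
    _ ≤ _ := by gcongr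

theorem fourier_sine_decay :
    ∀ α : ℝ, 0 < α → α < 1 →
      ∃ C : ℝ, 0 < C ∧
        ∀ A : ℝ, 0 < A →
          ∀ f f' f'' : ℝ → ℝ,
            (∀ x ∈ Ioo (0 : ℝ) π, HasDerivAt f (f' x) x) →
            (∀ x ∈ Ioo (0 : ℝ) π, HasDerivAt f' (f'' x) x) →
            ContinuousOn f'' (Ioo (0 : ℝ) π) →
            (∀ x ∈ Icc (π / 4) π, f x = 0) →
            (∀ x ∈ Ioc (0 : ℝ) (π / 4), |f x| ≤ A * x ^ α) →
            (∀ x ∈ Ioc (0 : ℝ) (π / 4), |f' x| ≤ A * x ^ (α - 1)) →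
            (∀ x ∈ Ioc (0 : ℝ) (π / 4), |f'' x| ≤ A * x ^ (α - 2)) →
            ∀ k : ℕ, 1 ≤ k →
              |∫ x in (0:ℝ)..π, f x * Real.sin (k * x)|
                ≤ C * A * (k : ℝ) ^ (-1 - α) := by
  intro α hα0 hα1
  refine ⟨7 + 4 / (1 - α), by have := sub_pos.2 hα1; positivity, ?_⟩
  intro A hA f f' f'' hf hf' hf''c hzero hb0 hb1 hb2 k hk
  have hπ := pi_gt_three
  have hK : (1 : ℝ) ≤ k := Nat.one_le_cast.2 hk
  set δ := (2 * (k : ℝ))⁻¹ with hδ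
  have hδ0 : 0 < δ := by positivity
  have hδπ : δ ≤ π / 4 := (inv_anti₀ two_pos (by linarith : (2 : ℝ) ≤ 2 * k)).trans (by linarith)
  have hδπ2 : δ ≤ π / 2 := by linarith
  have hsub : Icc δ (π / 2) ⊆ Ioo 0 π := fun x hx => ⟨hδ0.trans_le hx.1, by linarith [hx.2]⟩
  have hf'0 : EqOn f' 0 (Ioo (π / 4) π) := eqOn_zero_of_hasDerivAt isOpen_Ioo
    (fun x hx => hf x ⟨by linarith [hx.1], hx.2⟩) fun x hx => hzero x ⟨hx.1.le, hx.2.le⟩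
  have hf''0 : EqOn f'' 0 (Ioo (π / 4) π) := eqOn_zero_of_hasDerivAt isOpen_Ioo
    (fun x hx => hf' x ⟨by linarith [hx.1], hx.2⟩) hf'0
  have hb2' : ∀ x ∈ Icc δ (π / 2), |f'' x| ≤ A * x ^ (α - 2) := fun x hx => by
    rcases le_or_gt x (π / 4) with hx4 | hx4
    · exact hb2 x ⟨hδ0.trans_le hx.1, hx4⟩
    · rw [hf''0 ⟨hx4, by linarith [hx.2]⟩, Pi.zero_apply, abs_zero]
      exact mul_nonneg hA.le (rpow_nonneg (hδ0.le.trans hx.1) _)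
  rw [intervalIntegral.integral_eq_of_eqOn_zero (b := π / 2) (by linarith) (by linarith)
    fun x hx => by simp [hzero x ⟨by linarith [hx.1], hx.2⟩]]
  refine (abs_integral_mul_sin_le_of_rpow_bounds (by linarith) hα1 (by linarith) hδ0 hδπ2
    (fun x hx => hf x ⟨hx.1, by linarith [hx.2]⟩) (fun x hx => hf' x (hsub hx))
    (ContinuousOn.intervalIntegrable (uIcc_of_le hδπ2 ▸ hf''c.mono hsub))
    (hzero _ ⟨by linarith, by linarith⟩) (hf'0 ⟨by linarith, by linarith⟩)
    (fun x hx => hb0 x ⟨hx.1, hx.2.trans hδπ⟩) (hb1 δ ⟨hδ0, hδπ⟩) hb2').trans ?_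
  exact split_bound_at_inv_two_mul_le hα0 hα1 hA.le (by linarith) hδ
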